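/- arXiv:1907.01037 — 6 statements merged into one kernel-verified Lean document; each statement's English description precedes it below -/
import Mathlib

section
/- Let a ∈ ℝ≥0, let I be a finite nonempty index set with elements a_i ∈ ℝ≥0 for i ∈ I, and let J be a finite index set partitioned as the disjoint union J = ⨆_{i∈I} J_i, with elements b_j ∈ ℝ≥0 for j ∈ J. If the maximum occurs twice in the family consisting of a together with (a_i)_{i∈I}, and if for every i ∈ I the maximum occurs twice in the family consisting of a_i together with (b_j)_{j∈J_i}, then the maximum occurs twice in the family consisting of a together with (b_j)_{j∈J}. -/
/-!
Let `N` be the largest of the fibre maxima, attained in the fibre over `i₀`. Every `b j` and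
`a` are at most `N`. Either `N` occurs twice among the `b j` of that fibre, or `N = aa i₀`;
then `N` is also the maximum of `a, (aa i)`, and sending each `i` to a maximiser in its fibre
carries the two occurrences of `N` in `a, (aa i)` to two occurrences in `a, (b j)`.
-/

open scoped NNReal

/-- The maximum of a family of nonnegative reals occurs twice. -/
def MaxOccursTwice {ι : Type*} (t : ι → ℝ≥0) : Prop :=
  ∃ i j : ι, i ≠ j ∧ t i = t j ∧ ∀ k, t k ≤ t i

namespace MaxOccursTwice

variable {ι κ : Type*}

lemma exists_max_of_optionElim {x : ℝ≥0} {f : ι → ℝ≥0}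
    (h : MaxOccursTwice (fun o : Option ι => o.elim x f)) :
    ∃ j, x ≤ f j ∧ (∀ k, f k ≤ f j) ∧ (x = f j ∨ MaxOccursTwice f) := by
  obtain ⟨_ | i, _ | j, hne, heq, hmax⟩ := h
  · exact absurd rfl hne
  · exact ⟨j, heq.le, fun k => (hmax (some k)).trans heq.le, Or.inl heq⟩
  · exact ⟨i, heq.ge, fun k => hmax (some k), Or.inl heq.symm⟩
  · exact ⟨i, hmax none, fun k => hmax (some k),
      Or.inr ⟨i, j, fun hij => hne (congrArg some hij), heq, fun k => hmax (some k)⟩⟩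

lemma of_le {t s : ι → ℝ≥0} (h : MaxOccursTwice t) (hle : ∀ k, t k ≤ s k) (i₀ : ι)
    (hs : ∀ k, s k ≤ t i₀) : MaxOccursTwice s := by
  obtain ⟨i, j, hne, heq, hmax⟩ := h
  have hi : s i = t i := le_antisymm ((hs i).trans (hmax i₀)) (hle i)
  have hj : s j = t i := le_antisymm ((hs j).trans (hmax i₀)) (heq ▸ hle j)
  exact ⟨i, j, hne, hi.trans hj.symm, fun k => hi ▸ (hs k).trans (hmax i₀)⟩

lemma of_comp {t : κ → ℝ≥0} {f : ι → κ} (h : MaxOccursTwice (t ∘ f))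
    (hf : Function.Injective f) (i₀ : ι) (hbound : ∀ k, t k ≤ t (f i₀)) :
    MaxOccursTwice t := by
  obtain ⟨i, j, hne, heq, hmax⟩ := h
  exact ⟨f i, f j, hf.ne hne, heq, fun k => (hbound k).trans (hmax i₀)⟩

end MaxOccursTwice

theorem maxTwice_comp_general
    {I J : Type*} [Fintype I]
    (a : ℝ≥0) (aa : I → ℝ≥0) (b : J → ℝ≥0) (p : J → I)
    (h1 : MaxOccursTwice (fun o : Option I => o.elim a aa))
    (h2 : ∀ i : I, MaxOccursTwice
      (fun o : Option {j : J // p j = i} => o.elim (aa i) (fun j => b j.1))) :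
    MaxOccursTwice (fun o : Option J => o.elim a b) := by
  choose m hm_ge hm_max hm_cases using fun i => (h2 i).exists_max_of_optionElim
  obtain ⟨i₁, ha, -⟩ := h1.exists_max_of_optionElim
  have : Nonempty I := ⟨i₁⟩
  obtain ⟨i₀, hi₀⟩ := Finite.exists_max fun i => b (m i).1
  have hN : ∀ o : Option J, o.elim a b ≤ b (m i₀).1
    | none => ha.trans ((hm_ge i₁).trans (hi₀ i₁))
    | some j => (hm_max (p j) ⟨j, rfl⟩).trans (hi₀ (p j))
  rcases hm_cases i₀ with h_top | h_fiber
  · have hm_inj : Function.Injective fun i => (m i).1 := fun i i' h =>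
      (m i).2.symm.trans ((congrArg p h).trans (m i').2)
    refine MaxOccursTwice.of_comp ?_ (Option.map_injective hm_inj) (some i₀) hN
    exact h1.of_le (fun | none => le_rfl | some i => hm_ge i) (some i₀)
      fun _ => (hN _).trans h_top.ge
  · exact MaxOccursTwice.of_comp (f := fun j : {j // p j = i₀} => some j.1) h_fiber
      (Option.some_injective _ |>.comp Subtype.val_injective) (m i₀) hN

/-- Composition step for the maximum-occurs-twice condition.  Here `I` is a
finite nonempty index set, `J` a finite index set partitioned into the fibers
`J_i = p⁻¹(i)` of a map `p : J → I`.  If the maximum occurs twice in the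
family `a, (aa i)_{i ∈ I}` and, for each `i ∈ I`, in the family
`aa i, (b j)_{j ∈ J_i}`, then the maximum occurs twice in the family
`a, (b j)_{j ∈ J}`. -/
theorem maxTwice_comp
    {I J : Type*} [Fintype I] [Nonempty I] [Fintype J]
    (a : ℝ≥0) (aa : I → ℝ≥0) (b : J → ℝ≥0) (p : J → I)
    (h1 : MaxOccursTwice (fun o : Option I => o.elim a aa))
    (h2 : ∀ i : I, MaxOccursTwice
      (fun o : Option {j : J // p j = i} => o.elim (aa i) (fun j => b j.1))) :
    MaxOccursTwice (fun o : Option J => o.elim a b) :=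
  maxTwice_comp_general a aa b p h1 h2
end

section
/- Let B be a set, n ≥ 1, and b₀, b₁, …, bₙ ∈ B. Then the set { f ∈ ℝ≥0^B | the maximum occurs twice among f(b₀), f(b₁), …, f(bₙ) } is a closed subset of ℝ≥0^B with the product topology (where ℝ≥0 carries the Euclidean topology). -/
open scoped NNReal

theorem isClosed_setOf_maxOccursTwice {X ι : Type*} [TopologicalSpace X] [Finite ι]
    {g : ι → X → ℝ≥0} (hg : ∀ i, Continuous (g i)) :
    IsClosed {x | MaxOccursTwice fun i => g i x} := by
  simp only [MaxOccursTwice, Set.ofPred_exists]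
  refine isClosed_iUnion_of_finite fun i => isClosed_iUnion_of_finite fun j => ?_
  refine isClosed_const.and <| (isClosed_eq (hg i) (hg j)).and ?_
  simpa only [Set.ofPred_forall] using isClosed_iInter fun k => isClosed_le (hg k) (hg i)

theorem isClosed_maxTwice_set_general
    {B : Type*} (n : ℕ) (b : Fin (n + 1) → B) :
    IsClosed {f : B → ℝ≥0 | MaxOccursTwice (fun i => f (b i))} :=
  isClosed_setOf_maxOccursTwice fun i => continuous_apply (b i)

/-- For a set `B`, `n ≥ 1` and elements `b₀, …, bₙ ∈ B`, the set of those
`f : B → ℝ≥0` such that the maximum occurs twice among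
`f b₀, f b₁, …, f bₙ` is closed in `ℝ≥0^B` with the product topology. -/
theorem isClosed_maxTwice_set
    {B : Type*} (n : ℕ) (hn : 1 ≤ n) (b : Fin (n + 1) → B) :
    IsClosed {f : B → ℝ≥0 | MaxOccursTwice (fun i => f (b i))} :=
  isClosed_maxTwice_set_general n b
end

section
/- Let k be a field, v : k → ℝ≥0 a nonarchimedean absolute value, A a commutative monoid, φ : k[A] → R a k-algebra homomorphism from the monoid algebra k[A] to a commutative k-algebra R, and w : R → ℝ≥0 a nonarchimedean seminorm with w(c·1_R) = v(c) for all c ∈ k. Then for every p ∈ ker φ, writing p = Σ_{a ∈ supp(p)} c_a·a, either the maximum of the values v(c_a)·w(φ(a)) over a ∈ supp(p) is attained for at least two distinct a ∈ supp(p), or this maximum equals 0. In other words, the map a ↦ w(φ(a)) lies in the bend locus Z(p^trop) of every p in the ideal of definition, so the Kajiwara–Payne tropicalization map trop(w) = w ∘ φ|_A indeed lands in X^trop. -/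
/-!
If one summand of a finite sum strictly dominates all others for an ultrametric, symmetric `w`,
then `w` of the sum equals `w` of that summand. Since `φ p = ∑ φ (c_a • a)` vanishes and
`w (φ (c_a • a)) = v c_a * w (φ a)`, a unique nonzero maximum would give `w 0 > 0`.
-/

open scoped NNReal

theorem IsNonarchimedean.exists_ne_eq_max_or_eq_apply_zero_of_sum_eq_zero
    {α S ι : Type*} [AddCommGroup α] [LinearOrder S] {f : α → S} (hf : IsNonarchimedean f)
    (hf_neg : ∀ x, f (-x) = f x) {s : Finset ι} {l : ι → α} (hl : ∑ i ∈ s, l i = 0) :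
    (∃ i ∈ s, ∃ j ∈ s, i ≠ j ∧ f (l i) = f (l j) ∧ ∀ k ∈ s, f (l k) ≤ f (l i)) ∨
      ∀ i ∈ s, f (l i) = f 0 := by
  classical
  have hf_zero_le : ∀ x, f 0 ≤ f x := fun x => by
    simpa [hf_neg] using hf x (-x)
  rcases s.eq_empty_or_nonempty with rfl | hs
  · simp
  obtain ⟨i, hi, hmax⟩ := s.exists_max_image (fun k => f (l k)) hs
  by_cases hi0 : f (l i) = f 0
  · exact .inr fun k hk => le_antisymm (hi0 ▸ hmax k hk) (hf_zero_le _)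
  refine .inl ⟨i, hi, ?_⟩
  by_contra! hunique
  have hdom : ∀ j ∈ s, j ≠ i → f (l j) < f (l i) := fun j hj hji =>
    (hmax j hj).lt_of_ne fun h =>
      let ⟨k, hk, hik⟩ := hunique j hj hji.symm h.symm
      (hmax k hk).not_gt hik
  exact hi0 (by rw [← hl, hf.apply_sum_eq_of_lt (fun x => (hf_neg x).symm) hi hdom])

theorem trop_of_seminorm_mem_bendLocus_general
    {k R A : Type*} [Field k] [CommRing R] [Algebra k R] [CommMonoid A]
    (v : k → ℝ≥0)
    (φ : MonoidAlgebra k A →ₐ[k] R)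
    (w : R → ℝ≥0) (hw0 : w 0 = 0) (hw1 : w 1 = 1)
    (hwmul : ∀ a b : R, w (a * b) = w a * w b)
    (hwadd : ∀ a b : R, w (a + b) ≤ max (w a) (w b))
    (hwv : ∀ c : k, w (algebraMap k R c) = v c)
    (p : MonoidAlgebra k A) (hp : φ p = 0) :
    (∃ a ∈ p.coeff.support, ∃ b ∈ p.coeff.support, a ≠ b ∧
        v (p.coeff a) * w (φ (MonoidAlgebra.of k A a)) =
          v (p.coeff b) * w (φ (MonoidAlgebra.of k A b)) ∧
        ∀ c ∈ p.coeff.support,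
          v (p.coeff c) * w (φ (MonoidAlgebra.of k A c)) ≤
            v (p.coeff a) * w (φ (MonoidAlgebra.of k A a))) ∨
    (∀ a ∈ p.coeff.support, v (p.coeff a) * w (φ (MonoidAlgebra.of k A a)) = 0) := by
  have hneg : ∀ x : R, w (-x) = w x := (MonoidHom.mk ⟨w, hw1⟩ hwmul).map_neg
  have hterm : ∀ a c, v c * w (φ (MonoidAlgebra.of k A a)) = w (φ (MonoidAlgebra.single a c)) :=
    fun a c => by
      rw [MonoidAlgebra.single_eq_algebraMap_mul_of, map_mul, AlgHom.commutes, hwmul, hwv]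
  have hsum : ∑ a ∈ p.coeff.support, φ (MonoidAlgebra.single a (p.coeff a)) = 0 := by
    rw [← map_sum, ← Finsupp.sum, MonoidAlgebra.sum_coeff_single, hp]
  simp only [hterm, ← hw0]
  exact IsNonarchimedean.exists_ne_eq_max_or_eq_apply_zero_of_sum_eq_zero hwadd hneg hsum

/-- Let `v` be a nonarchimedean absolute value on a field `k`, `A` a
commutative monoid, `φ : k[A] → R` a `k`-algebra homomorphism from the monoid
algebra, and `w : R → ℝ≥0` a nonarchimedean seminorm extending `v`.  Then for
every `p ∈ ker φ`, either the maximum of the values `v (p.coeff a) * w (φ a)` over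
`a ∈ supp p` is attained at two distinct elements of the support, or this
maximum is zero.  (Hence `a ↦ w (φ a)` lies in the bend locus `Z(p^trop)` of
every `p` in the ideal of definition.) -/
theorem trop_of_seminorm_mem_bendLocus
    {k R A : Type*} [Field k] [CommRing R] [Algebra k R] [CommMonoid A]
    (v : k → ℝ≥0) (hv0 : v 0 = 0) (hv1 : v 1 = 1)
    (hvmul : ∀ a b : k, v (a * b) = v a * v b)
    (hvadd : ∀ a b : k, v (a + b) ≤ max (v a) (v b))
    (hvabs : ∀ c : k, v c = 0 ↔ c = 0)
    (φ : MonoidAlgebra k A →ₐ[k] R)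
    (w : R → ℝ≥0) (hw0 : w 0 = 0) (hw1 : w 1 = 1)
    (hwmul : ∀ a b : R, w (a * b) = w a * w b)
    (hwadd : ∀ a b : R, w (a + b) ≤ max (w a) (w b))
    (hwv : ∀ c : k, w (algebraMap k R c) = v c)
    (p : MonoidAlgebra k A) (hp : φ p = 0) :
    (∃ a ∈ p.coeff.support, ∃ b ∈ p.coeff.support, a ≠ b ∧
        v (p.coeff a) * w (φ (MonoidAlgebra.of k A a)) =
          v (p.coeff b) * w (φ (MonoidAlgebra.of k A b)) ∧
        ∀ c ∈ p.coeff.support,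
          v (p.coeff c) * w (φ (MonoidAlgebra.of k A c)) ≤
            v (p.coeff a) * w (φ (MonoidAlgebra.of k A a))) ∨
    (∀ a ∈ p.coeff.support, v (p.coeff a) * w (φ (MonoidAlgebra.of k A a)) = 0) :=
  trop_of_seminorm_mem_bendLocus_general v φ w hw0 hw1 hwmul hwadd hwv p hp
end

section
/- Setup: k is a field, v : k → ℝ≥0 a nonarchimedean absolute value, A a commutative monoid, φ : k[A] → R a surjective k-algebra homomorphism with kernel I, and Bend^GG_{v,φ}(R) the Giansiracusa bend. Then the map sending a 𝕋-algebra homomorphism g : Bend^GG_{v,φ}(R) → 𝕋 to the function f : A → ℝ≥0 given by f(a) = g([a]) is a bijection from the set of 𝕋-algebra homomorphisms Bend^GG_{v,φ}(R) → 𝕋 onto the Kajiwara–Payne tropicalization X^trop; moreover, it is a homeomorphism when the homomorphism set carries the topology of pointwise convergence (induced from the product topology on 𝕋^{Bend^GG_{v,φ}(R)}) and X^trop carries its subspace topology in ℝ≥0^A. -/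
open scoped NNReal

/-- The tropical semifield `𝕋`: underlying set `ℝ≥0`, addition `max`, usual
multiplication. -/
def Trop : Type := ℝ≥0

/-- Identification `ℝ≥0 → 𝕋`. -/
def toTrop : ℝ≥0 → Trop := id

/-- Identification `𝕋 → ℝ≥0`. -/
def ofTrop : Trop → ℝ≥0 := id

instance : Zero Trop := ⟨toTrop 0⟩
instance : One Trop := ⟨toTrop 1⟩
noncomputable instance : Add Trop := ⟨fun a b => toTrop (max (ofTrop a) (ofTrop b))⟩
noncomputable instance : Mul Trop := ⟨fun a b => toTrop (ofTrop a * ofTrop b)⟩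

noncomputable instance : CommSemiring Trop where
  add := (· + ·)
  zero := 0
  mul := (· * ·)
  one := 1
  nsmul := nsmulRec
  add_assoc a b c := max_assoc (ofTrop a) (ofTrop b) (ofTrop c)
  add_comm a b := max_comm (ofTrop a) (ofTrop b)
  zero_add a := max_eq_right (zero_le : (0 : ℝ≥0) ≤ ofTrop a)
  add_zero a := max_eq_left (zero_le : (0 : ℝ≥0) ≤ ofTrop a)
  mul_assoc a b c := mul_assoc (ofTrop a) (ofTrop b) (ofTrop c)
  one_mul a := one_mul (ofTrop a)
  mul_one a := mul_one (ofTrop a)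
  mul_comm a b := mul_comm (ofTrop a) (ofTrop b)
  zero_mul a := zero_mul (ofTrop a)
  mul_zero a := mul_zero (ofTrop a)
  left_distrib a b c := by
    show ofTrop a * max (ofTrop b) (ofTrop c)
        = max (ofTrop a * ofTrop b) (ofTrop a * ofTrop c)
    rcases le_total (ofTrop b) (ofTrop c) with h | h
    · rw [max_eq_right h, max_eq_right (by gcongr)]
    · rw [max_eq_left h, max_eq_left (by gcongr)]
  right_distrib a b c := by
    show max (ofTrop a) (ofTrop b) * ofTrop c
        = max (ofTrop a * ofTrop c) (ofTrop b * ofTrop c)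
    rcases le_total (ofTrop a) (ofTrop b) with h | h
    · rw [max_eq_right h, max_eq_right (by gcongr)]
    · rw [max_eq_left h, max_eq_left (by gcongr)]

/-- The Euclidean topology on `𝕋 = ℝ≥0`. -/
noncomputable instance : TopologicalSpace Trop :=
  inferInstanceAs (TopologicalSpace ℝ≥0)

-- aux
lemma ofTrop_add (a b : Trop) : ofTrop (a + b) = max (ofTrop a) (ofTrop b) := rfl

lemma trop_sum_eq_sup {ι : Type*} (s : Finset ι) (h : ι → Trop) :
    ofTrop (∑ x ∈ s, h x) = s.sup fun x => ofTrop (h x) := by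
  classical
  induction s using Finset.induction with
  | empty => simp; rfl
  | insert _ _ hx ih => rw [Finset.sum_insert hx, Finset.sup_insert, ofTrop_add, ih]

lemma sup_eq_of_subset {ι : Type*} {s t : Finset ι} (hst : s ⊆ t) (w : ι → ℝ≥0)
    (hw : ∀ a ∈ t, a ∉ s → w a = 0) : t.sup w = s.sup w := by
  classical
  refine le_antisymm (Finset.sup_le fun a ha => ?_) (Finset.sup_mono hst)
  by_cases h : a ∈ s
  · exact Finset.le_sup h
  · rw [hw a ha h]; exact zero_le

lemma sup_erase_eq_of_cond {ι : Type*} [DecidableEq ι] {S : Finset ι} {w : ι → ℝ≥0}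
    (h : (∃ a ∈ S, ∃ b ∈ S, a ≠ b ∧ w a = w b ∧ ∀ c ∈ S, w c ≤ w a) ∨ ∀ a ∈ S, w a = 0)
    (a : ι) (_ : a ∈ S) : S.sup w = (S.erase a).sup w := by
  refine le_antisymm ?_ (Finset.sup_mono (Finset.erase_subset _ _))
  rcases h with ⟨x, hx, y, hy, hxy, hwxy, hmax⟩ | h0
  · refine Finset.sup_le fun c hc => le_trans (hmax c hc) ?_
    rcases eq_or_ne x a with rfl | hxa
    · rw [hwxy]; exact Finset.le_sup (Finset.mem_erase.mpr ⟨fun h' => hxy h'.symm, hy⟩)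
    · exact Finset.le_sup (Finset.mem_erase.mpr ⟨hxa, hx⟩)
  · exact Finset.sup_le fun c hc => le_trans (le_of_eq (h0 c hc)) (zero_le)

lemma cond_of_sup_erase {ι : Type*} [DecidableEq ι] {S : Finset ι} {w : ι → ℝ≥0}
    (h : ∀ a ∈ S, S.sup w = (S.erase a).sup w) :
    (∃ a ∈ S, ∃ b ∈ S, a ≠ b ∧ w a = w b ∧ ∀ c ∈ S, w c ≤ w a) ∨ ∀ a ∈ S, w a = 0 := by
  rcases eq_or_ne (S.sup w) 0 with hM | hM
  · exact Or.inr fun a ha => le_antisymm (hM ▸ Finset.le_sup ha) (zero_le)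
  · have hSne : S.Nonempty := by
      rcases S.eq_empty_or_nonempty with rfl | h'
      · simp at hM
      · exact h'
    obtain ⟨a, ha, hae⟩ := Finset.exists_mem_eq_sup S hSne w
    have h2 : (S.erase a).sup w = S.sup w := (h a ha).symm
    have hne : (S.erase a).Nonempty := by
      rcases (S.erase a).eq_empty_or_nonempty with he | h'
      · rw [he] at h2; simp at h2; exact (hM h2.symm).elim
      · exact h'
    obtain ⟨b, hb, hbe⟩ := Finset.exists_mem_eq_sup _ hne w
    refine Or.inl ⟨a, ha, b, (Finset.mem_erase.mp hb).2, fun h' => (Finset.mem_erase.mp hb).1 h'.symm,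
      hae.symm.trans ((h a ha).trans hbe), fun c hc => hae ▸ Finset.le_sup hc⟩

lemma continuous_finset_sup'' {X ι : Type*} [TopologicalSpace X] (s : Finset ι)
    (w : X → ι → ℝ≥0) (hw : ∀ i, Continuous fun x => w x i) :
    Continuous fun x => s.sup (w x) := by
  classical
  induction s using Finset.induction with
  | empty => simpa using continuous_const
  | @insert a s ha ih =>
      simp only [Finset.sup_insert]
      exact (hw a).max ih

def ringHomKerCon {S T : Type*} [NonAssocSemiring S] [NonAssocSemiring T] (ψ : S →+* T) :
    RingCon S where
  r x y := ψ x = ψ y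
  iseqv := ⟨fun _ => rfl, Eq.symm, Eq.trans⟩
  mul' {a b c d} h1 h2 := show ψ (a * c) = ψ (b * d) by
    rw [map_mul, map_mul]; exact congrArg₂ (· * ·) h1 h2
  add' {a b c d} h1 h2 := show ψ (a + c) = ψ (b + d) by
    rw [map_add, map_add]; exact congrArg₂ (· + ·) h1 h2

section
variable {k A R : Type*} [Field k] [CommMonoid A] [CommRing R] [Algebra k R]

/-- `p^trop ∈ 𝕋[A]`: coefficientwise application of `v` to `p ∈ k[A]`. -/
noncomputable def ptrop (v : k → ℝ≥0) (hv0 : v 0 = 0) (p : MonoidAlgebra k A) :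
    MonoidAlgebra Trop A :=
  MonoidAlgebra.ofCoeff (Finsupp.mapRange (fun c => toTrop (v c))
    (by show toTrop (v 0) = 0; rw [hv0]; rfl) p.coeff)

/-- The bend congruence `bend_{v,φ}`: the smallest semiring congruence on
`𝕋[A]` containing, for every `p ∈ ker φ` and every `a ∈ supp p`, the pair
`(p^trop, p^trop with its a-term removed)`.  The quotient
`(bendCon v hv0 φ).Quotient` is the Giansiracusa bend `Bend^GG_{v,φ}(R)`,
a `𝕋`-algebra via `t ↦ ⟦t·1⟧`. -/
noncomputable def bendCon (v : k → ℝ≥0) (hv0 : v 0 = 0)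
    (φ : MonoidAlgebra k A →ₐ[k] R) : RingCon (MonoidAlgebra Trop A) :=
  ringConGen (fun x y => ∃ p : MonoidAlgebra k A, φ p = 0 ∧
    ∃ a ∈ p.coeff.support, x = ptrop v hv0 p ∧
      y = MonoidAlgebra.ofCoeff ((ptrop v hv0 p).coeff.erase a))

/-- The set of `𝕋`-algebra homomorphisms from the Giansiracusa bend
`Bend^GG_{v,φ}(R) = 𝕋[A]/bend_{v,φ}` to `𝕋`, as a subtype of the function
space (carrying the topology of pointwise convergence). -/
abbrev TAlgHoms (v : k → ℝ≥0) (hv0 : v 0 = 0) (φ : MonoidAlgebra k A →ₐ[k] R) :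
    Type _ :=
  {g : (bendCon v hv0 φ).Quotient → Trop //
    (∀ x y, g (x + y) = g x + g y) ∧ (∀ x y, g (x * y) = g x * g y) ∧
    g 0 = 0 ∧ g 1 = 1 ∧
    ∀ t : Trop,
      g ((bendCon v hv0 φ).mk' (MonoidAlgebra.singleOneRingHom t)) = t}

/-- The Kajiwara–Payne tropicalization `X^trop`: monoid homomorphisms
`f : A → ℝ≥0` such that for every `p ∈ ker φ` either the maximum of
`{v (p a) * f a : a ∈ supp p}` is attained at two distinct elements of the
support, or this maximum is zero; a subtype of `ℝ≥0^A` with the topology of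
pointwise convergence. -/
abbrev XTrop (v : k → ℝ≥0) (φ : MonoidAlgebra k A →ₐ[k] R) : Type _ :=
  {f : A → ℝ≥0 //
    f 1 = 1 ∧ (∀ a b : A, f (a * b) = f a * f b) ∧
    ∀ p : MonoidAlgebra k A, φ p = 0 →
      ((∃ a ∈ p.coeff.support, ∃ b ∈ p.coeff.support, a ≠ b ∧
          v (p.coeff a) * f a = v (p.coeff b) * f b ∧
          ∀ c ∈ p.coeff.support, v (p.coeff c) * f c ≤ v (p.coeff a) * f a) ∨
       (∀ a ∈ p.coeff.support, v (p.coeff a) * f a = 0))}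

/-- Evaluation of `𝕋[A]` at a monoid homomorphism `f : A → ℝ≥0`. -/
noncomputable def evalF (f : A → ℝ≥0) (h1 : f 1 = 1)
    (hm : ∀ a b : A, f (a * b) = f a * f b) : MonoidAlgebra Trop A →+* Trop :=
  ((MonoidAlgebra.lift Trop Trop A
    { toFun := fun a => toTrop (f a)
      map_one' := congrArg toTrop h1
      map_mul' := fun a b => congrArg toTrop (hm a b) }) :
    MonoidAlgebra Trop A →ₐ[Trop] Trop).toRingHom

lemma evalF_single (f : A → ℝ≥0) (h1 : f 1 = 1) (hm : ∀ a b : A, f (a * b) = f a * f b)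
    (a : A) (b : Trop) :
    evalF f h1 hm (MonoidAlgebra.single a b) = b * toTrop (f a) := by
  show (MonoidAlgebra.lift Trop Trop A _) (MonoidAlgebra.single a b) = _
  rw [MonoidAlgebra.lift_single]
  rfl

lemma evalF_eq_sup (f : A → ℝ≥0) (h1 : f 1 = 1) (hm : ∀ a b : A, f (a * b) = f a * f b)
    (q : MonoidAlgebra Trop A) (S : Finset A) (hS : q.coeff.support ⊆ S) :
    ofTrop (evalF f h1 hm q) = S.sup fun a => ofTrop (q.coeff a) * f a := by
  classical
  have h : evalF f h1 hm q = q.coeff.sum fun a b => b * toTrop (f a) := by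
    show (MonoidAlgebra.lift Trop Trop A _) q = _
    rw [MonoidAlgebra.lift_apply]
    rfl
  rw [h, Finsupp.sum, trop_sum_eq_sup]
  refine Eq.trans ?_ (sup_eq_of_subset hS (fun a => ofTrop (q.coeff a) * f a) fun a _ ha => ?_).symm
  · exact Finset.sup_congr rfl fun a _ => rfl
  · show ofTrop (q.coeff a) * f a = 0
    rw [Finsupp.notMem_support_iff.mp ha]
    exact zero_mul _
lemma evalF_ptrop (v : k → ℝ≥0) (hv0 : v 0 = 0) (f : A → ℝ≥0) (h1 : f 1 = 1)
    (hm : ∀ a b : A, f (a * b) = f a * f b) (p : MonoidAlgebra k A) :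
    ofTrop (evalF f h1 hm (ptrop v hv0 p)) = p.coeff.support.sup fun a => v (p.coeff a) * f a := by
  rw [evalF_eq_sup f h1 hm (ptrop v hv0 p) p.coeff.support
    (by rw [ptrop]; exact Finsupp.support_mapRange (hf := by rw [hv0]; rfl))]
  exact Finset.sup_congr rfl fun a _ => rfl

lemma evalF_ptrop_erase [DecidableEq A] (v : k → ℝ≥0) (hv0 : v 0 = 0) (f : A → ℝ≥0)
    (h1 : f 1 = 1) (hm : ∀ a b : A, f (a * b) = f a * f b) (p : MonoidAlgebra k A) (a : A) :
    ofTrop (evalF f h1 hm ((ptrop v hv0 p).erase a))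
      = (p.coeff.support.erase a).sup fun b => v (p.coeff b) * f b := by
  have hsub : ((ptrop v hv0 p).erase a).coeff.support ⊆ p.coeff.support.erase a := by
    rw [MonoidAlgebra.coeff_erase, Finsupp.support_erase, ptrop]
    exact Finset.erase_subset_erase _ (Finsupp.support_mapRange (hf := by rw [hv0]; rfl))
  rw [evalF_eq_sup f h1 hm ((ptrop v hv0 p).erase a) _ hsub]
  refine Finset.sup_congr rfl fun b hb => ?_
  rw [MonoidAlgebra.coeff_erase, Finsupp.erase_ne (Finset.ne_of_mem_erase hb)]
  rfl

variable (v : k → ℝ≥0) (hv0 : v 0 = 0) (φ : MonoidAlgebra k A →ₐ[k] R)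

/-- The ring homomorphism `𝕋[A] → 𝕋` underlying a `𝕋`-algebra hom on the bend. -/
noncomputable def psiOf (g : TAlgHoms v hv0 φ) : MonoidAlgebra Trop A →+* Trop where
  toFun x := g.1 ((bendCon v hv0 φ).mk' x)
  map_one' := show g.1 ((bendCon v hv0 φ).mk' 1) = 1 by
    rw [map_one]; exact g.2.2.2.2.1
  map_mul' x y := show g.1 ((bendCon v hv0 φ).mk' (x * y)) = _ by
    rw [map_mul]; exact g.2.2.1 _ _
  map_zero' := show g.1 ((bendCon v hv0 φ).mk' 0) = 0 by
    rw [map_zero]; exact g.2.2.2.1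
  map_add' x y := show g.1 ((bendCon v hv0 φ).mk' (x + y)) = _ by
    rw [map_add]; exact g.2.1 _ _

lemma psi_eq (g : TAlgHoms v hv0 φ) (h1 hm) :
    psiOf v hv0 φ g = evalF
      (fun a => ofTrop (g.1 ((bendCon v hv0 φ).mk' (MonoidAlgebra.of Trop A a)))) h1 hm := by
  refine MonoidAlgebra.ringHom_ext (fun b => ?_) (fun a => ?_)
  · show g.1 ((bendCon v hv0 φ).mk' (MonoidAlgebra.single 1 b)) = _
    rw [evalF_single, congrArg toTrop h1]
    exact (g.2.2.2.2.2 b).trans (mul_one b).symm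
  · show g.1 ((bendCon v hv0 φ).mk' (MonoidAlgebra.single a 1)) = _
    rw [evalF_single]
    exact (one_mul _).symm

lemma bend_rel (p : MonoidAlgebra k A) (hp : φ p = 0) {a : A} (ha : a ∈ p.coeff.support) :
    (bendCon v hv0 φ) (ptrop v hv0 p) ((ptrop v hv0 p).erase a) :=
  RingConGen.Rel.of _ _ ⟨p, hp, a, ha, rfl, rfl⟩
lemma eval_respects (f : XTrop v φ) :
    ∀ x y, (bendCon v hv0 φ) x y →
      evalF f.1 f.2.1 f.2.2.1 x = evalF f.1 f.2.1 f.2.2.1 y := by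
  classical
  intro x y hxy
  refine ((RingCon.ringConGen_le (c := ringHomKerCon (evalF f.1 f.2.1 f.2.2.1))).mpr ?_) hxy
  rintro x y ⟨p, hp, a, ha, rfl, rfl⟩
  show evalF f.1 f.2.1 f.2.2.1 (ptrop v hv0 p)
      = evalF f.1 f.2.1 f.2.2.1 ((ptrop v hv0 p).erase a)
  have h1 := evalF_ptrop v hv0 f.1 f.2.1 f.2.2.1 p
  have h2 := evalF_ptrop_erase v hv0 f.1 f.2.1 f.2.2.1 p a
  have h3 := sup_erase_eq_of_cond (w := fun b => v (p.coeff b) * f.1 b) (f.2.2.2 p hp) a ha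
  exact h1.trans (h3.trans h2.symm)

/-- The `𝕋`-algebra hom on the bend induced by a point of `X^trop`. -/
noncomputable def gOfHom (f : XTrop v φ) : TAlgHoms v hv0 φ :=
  ⟨fun x => Quotient.liftOn' x (evalF f.1 f.2.1 f.2.2.1) (eval_respects v hv0 φ f),
   fun x y => Quotient.inductionOn₂' x y fun p q =>
     map_add (evalF f.1 f.2.1 f.2.2.1) p q,
   fun x y => Quotient.inductionOn₂' x y fun p q =>
     map_mul (evalF f.1 f.2.1 f.2.2.1) p q,
   map_zero (evalF f.1 f.2.1 f.2.2.1),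
   map_one (evalF f.1 f.2.1 f.2.2.1),
   fun t => by
     show evalF f.1 f.2.1 f.2.2.1 (MonoidAlgebra.single 1 t) = t
     rw [evalF_single, congrArg toTrop f.2.1]
     exact mul_one t⟩

/-- The map sending a `𝕋`-algebra homomorphism
`g : Bend^GG_{v,φ}(R) → 𝕋` to the function `a ↦ g ⟦a⟧` is a bijection onto
the Kajiwara–Payne tropicalization `X^trop`, and moreover a homeomorphism
for the topologies of pointwise convergence on both sides. -/
theorem bend_homs_homeomorph_xtrop
    (v : k → ℝ≥0) (hv0 : v 0 = 0) (hv1 : v 1 = 1)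
    (hvmul : ∀ a b : k, v (a * b) = v a * v b)
    (hvadd : ∀ a b : k, v (a + b) ≤ max (v a) (v b))
    (hvabs : ∀ c : k, v c = 0 ↔ c = 0)
    (φ : MonoidAlgebra k A →ₐ[k] R) (hφ : Function.Surjective φ) :
    ∃ e : TAlgHoms v hv0 φ ≃ₜ XTrop v φ,
      ∀ (g : TAlgHoms v hv0 φ) (a : A),
        (e g).1 a =
          ofTrop (g.1 ((bendCon v hv0 φ).mk' (MonoidAlgebra.of Trop A a))) := by
  classical
  have h1g : ∀ g : TAlgHoms v hv0 φ,
      ofTrop (g.1 ((bendCon v hv0 φ).mk' (MonoidAlgebra.of Trop A 1))) = 1 := fun g => by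
    rw [map_one, map_one]
    exact g.2.2.2.2.1
  have hmg : ∀ g : TAlgHoms v hv0 φ, ∀ a b : A,
      ofTrop (g.1 ((bendCon v hv0 φ).mk' (MonoidAlgebra.of Trop A (a * b))))
        = ofTrop (g.1 ((bendCon v hv0 φ).mk' (MonoidAlgebra.of Trop A a)))
          * ofTrop (g.1 ((bendCon v hv0 φ).mk' (MonoidAlgebra.of Trop A b))) := fun g a b => by
    rw [map_mul, map_mul]
    exact g.2.2.1 _ _
  have hbend : ∀ g : TAlgHoms v hv0 φ, ∀ p : MonoidAlgebra k A, φ p = 0 →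
      ((∃ a ∈ p.coeff.support, ∃ b ∈ p.coeff.support, a ≠ b ∧
          v (p.coeff a) * ofTrop (g.1 ((bendCon v hv0 φ).mk' (MonoidAlgebra.of Trop A a)))
            = v (p.coeff b) * ofTrop (g.1 ((bendCon v hv0 φ).mk' (MonoidAlgebra.of Trop A b))) ∧
          ∀ c ∈ p.coeff.support, v (p.coeff c) * ofTrop (g.1 ((bendCon v hv0 φ).mk' (MonoidAlgebra.of Trop A c)))
            ≤ v (p.coeff a) * ofTrop (g.1 ((bendCon v hv0 φ).mk' (MonoidAlgebra.of Trop A a)))) ∨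
       (∀ a ∈ p.coeff.support,
          v (p.coeff a) * ofTrop (g.1 ((bendCon v hv0 φ).mk' (MonoidAlgebra.of Trop A a))) = 0)) := by
    intro g p hp
    have hψ := psi_eq v hv0 φ g (h1g g) (hmg g)
    refine cond_of_sup_erase fun a ha => ?_
    have e1 : psiOf v hv0 φ g (ptrop v hv0 p)
        = psiOf v hv0 φ g ((ptrop v hv0 p).erase a) :=
      congrArg g.1 ((bendCon v hv0 φ).eq.mpr (bend_rel v hv0 φ p hp ha))
    rw [hψ] at e1
    exact (evalF_ptrop v hv0 _ _ _ p).symm.trans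
      ((congrArg ofTrop e1).trans (evalF_ptrop_erase v hv0 _ _ _ p a))
  let toF : TAlgHoms v hv0 φ → XTrop v φ := fun g =>
    ⟨fun a => ofTrop (g.1 ((bendCon v hv0 φ).mk' (MonoidAlgebra.of Trop A a))),
     h1g g, hmg g, hbend g⟩
  let invF : XTrop v φ → TAlgHoms v hv0 φ := gOfHom v hv0 φ
  have hleft : Function.LeftInverse invF toF := fun g => by
    apply Subtype.ext
    funext x
    refine Quotient.inductionOn' x fun p => ?_
    show evalF (toF g).1 (toF g).2.1 (toF g).2.2.1 p = g.1 ((bendCon v hv0 φ).mk' p)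
    exact (DFunLike.congr_fun (psi_eq v hv0 φ g (toF g).2.1 (toF g).2.2.1) p).symm
  have hright : Function.RightInverse invF toF := fun f => by
    apply Subtype.ext
    funext a
    show ofTrop (evalF f.1 f.2.1 f.2.2.1 (MonoidAlgebra.single a 1)) = f.1 a
    rw [evalF_single]
    exact one_mul _
  have contTo : Continuous toF := by
    refine Continuous.subtype_mk (continuous_pi fun a => ?_) _
    exact (continuous_apply
      ((bendCon v hv0 φ).mk' (MonoidAlgebra.of Trop A a))).comp continuous_subtype_val
  have contInv : Continuous invF := by
    refine Continuous.subtype_mk (continuous_pi fun x => ?_) _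
    have hx : (fun f : XTrop v φ => (gOfHom v hv0 φ f).1 x)
        = fun f => toTrop ((Quotient.out x).coeff.support.sup
            fun a => ofTrop ((Quotient.out x).coeff a) * f.1 a) := by
      funext f
      have h : (gOfHom v hv0 φ f).1 x
          = evalF f.1 f.2.1 f.2.2.1 (Quotient.out x) := by
        conv_lhs => rw [← Quotient.out_eq' x]
        rfl
      exact h.trans (evalF_eq_sup f.1 f.2.1 f.2.2.1 _ _ (Finset.Subset.refl _))
    show Continuous fun f : XTrop v φ => (gOfHom v hv0 φ f).1 x
    rw [hx]
    exact continuous_finset_sup'' _ _ fun a =>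
      continuous_const.mul ((continuous_apply a).comp continuous_subtype_val)
  exact ⟨⟨⟨toF, invF, hleft, hright⟩, contTo, contInv⟩, fun g a => rfl⟩
end
end

section
/- Let k be a field and w : k[T] → ℝ≥0 a nonarchimedean seminorm on the polynomial ring such that w(c) = 1 for every c ∈ k \ {0} (i.e., w extends the trivial absolute value on k). Then w is of exactly one of the following forms: (i) w(g) = 1 for all g ≠ 0 (the trivial norm); (ii) there is a real number s > 1 with w(g) = s^{deg g} for all g ≠ 0; (iii) there are a monic irreducible polynomial f ∈ k[T] and r ∈ (0,1) with w(g) = r^{m} for all g ≠ 0, where m is the multiplicity of f as a factor of g; (iv) there is a monic irreducible polynomial f ∈ k[T] with w(g) = 0 if f divides g and w(g) = 1 otherwise, for g ≠ 0. -/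
open scoped NNReal

open Polynomial

/-- `w` is the trivial norm. -/
def IsTrivialNorm {k : Type*} [Field k] (w : Polynomial k → ℝ≥0) : Prop :=
  ∀ g : Polynomial k, g ≠ 0 → w g = 1

/-- `w` is a degree norm `g ↦ s^(deg g)` for some `s > 1` (the `∞`-adic
norms `w_{∞,r}` with `r = 1/s`). -/
def IsDegreeNorm {k : Type*} [Field k] (w : Polynomial k → ℝ≥0) : Prop :=
  ∃ s : ℝ≥0, 1 < s ∧ ∀ g : Polynomial k, g ≠ 0 → w g = s ^ g.natDegree

/-- `w` is an `f`-adic norm `w_{f,r}`: for a monic irreducible `f` and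
`r ∈ (0,1)`, `w g = r^m` where `m` is the multiplicity of `f` in `g`. -/
def IsAdicNorm {k : Type*} [Field k] (w : Polynomial k → ℝ≥0) : Prop :=
  ∃ f : Polynomial k, f.Monic ∧ Irreducible f ∧
    ∃ r : ℝ≥0, 0 < r ∧ r < 1 ∧
      ∀ g : Polynomial k, g ≠ 0 →
        ∀ m : ℕ, f ^ m ∣ g → ¬ f ^ (m + 1) ∣ g → w g = r ^ m

/-- `w` is a residue seminorm `w_{f,0}`: for a monic irreducible `f`,
`w g = 0` if `f ∣ g` and `w g = 1` otherwise. -/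
def IsResidueSeminorm {k : Type*} [Field k] (w : Polynomial k → ℝ≥0) : Prop :=
  ∃ f : Polynomial k, f.Monic ∧ Irreducible f ∧
    ∀ g : Polynomial k, g ≠ 0 → (f ∣ g → w g = 0) ∧ (¬ f ∣ g → w g = 1)

section Aux

variable {k : Type*} [Field k] {w : Polynomial k → ℝ≥0}

private lemma w_pow (hw1 : w 1 = 1) (hwmul : ∀ a b : Polynomial k, w (a * b) = w a * w b)
    (a : Polynomial k) : ∀ n : ℕ, w (a ^ n) = w a ^ n
  | 0 => by simpa using hw1
  | n + 1 => by rw [pow_succ, pow_succ, hwmul, w_pow hw1 hwmul a n]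

private lemma w_neg (hwmul : ∀ a b : Polynomial k, w (a * b) = w a * w b)
    (hwtriv : ∀ c : k, c ≠ 0 → w (C c) = 1) (a : Polynomial k) : w (-a) = w a := by
  have h1 : w (C (-1 : k)) = 1 := hwtriv _ (by norm_num)
  have : -a = C (-1 : k) * a := by simp
  rw [this, hwmul, h1, one_mul]

/-- the isoceles triangle principle -/
private lemma w_add_eq (hwmul : ∀ a b : Polynomial k, w (a * b) = w a * w b)
    (hwadd : ∀ a b : Polynomial k, w (a + b) ≤ max (w a) (w b))
    (hwtriv : ∀ c : k, c ≠ 0 → w (C c) = 1)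
    {a b : Polynomial k} (h : w b < w a) : w (a + b) = w a := by
  refine le_antisymm ((hwadd a b).trans (max_le le_rfl h.le)) ?_
  have ha : w a ≤ max (w (a + b)) (w b) := by
    have := hwadd (a + b) (-b)
    rw [w_neg hwmul hwtriv, add_neg_cancel_right] at this
    exact this
  rcases le_max_iff.mp ha with h' | h'
  · exact h'
  · exact absurd h' (not_le.mpr h)

end Aux

/-- Classification of the nonarchimedean seminorms on `k[T]` extending the
trivial absolute value on the field `k`: each such seminorm is of exactly one
of four forms (trivial, degree/∞-adic, `f`-adic, or residue seminorm). -/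
theorem seminorm_polynomial_trivial_classification
    {k : Type*} [Field k] (w : Polynomial k → ℝ≥0)
    (hw0 : w 0 = 0) (hw1 : w 1 = 1)
    (hwmul : ∀ a b : Polynomial k, w (a * b) = w a * w b)
    (hwadd : ∀ a b : Polynomial k, w (a + b) ≤ max (w a) (w b))
    (hwtriv : ∀ c : k, c ≠ 0 → w (C c) = 1) :
    (IsTrivialNorm w ∨ IsDegreeNorm w ∨ IsAdicNorm w ∨ IsResidueSeminorm w) ∧
    ¬ (IsTrivialNorm w ∧ IsDegreeNorm w) ∧
    ¬ (IsTrivialNorm w ∧ IsAdicNorm w) ∧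
    ¬ (IsTrivialNorm w ∧ IsResidueSeminorm w) ∧
    ¬ (IsDegreeNorm w ∧ IsAdicNorm w) ∧
    ¬ (IsDegreeNorm w ∧ IsResidueSeminorm w) ∧
    ¬ (IsAdicNorm w ∧ IsResidueSeminorm w) := by
  classical
  have wpow : ∀ (a : Polynomial k) (n : ℕ), w (a ^ n) = w a ^ n := w_pow hw1 hwmul
  have wmono : ∀ (n : ℕ) (a : k), a ≠ 0 → w (C a * X ^ n) = w X ^ n := by
    intro n a ha
    rw [hwmul, hwtriv a ha, one_mul, wpow]
  -- not-dvd-square fact for irreducibles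
  have hsq : ∀ f : Polynomial k, Irreducible f → ¬ f ^ 2 ∣ f := by
    intro f hf ⟨t, ht⟩
    apply hf.not_isUnit
    have heq : f * 1 = f * (f * t) := by
      calc f * 1 = f := mul_one f
        _ = f ^ 2 * t := ht
        _ = f * (f * t) := by ring
    have h := mul_left_cancel₀ hf.ne_zero heq
    exact IsUnit.of_mul_eq_one (a := f) t h.symm
  constructor
  · by_cases hX : 1 < w X
    · -- degree norm case
      right; left
      refine ⟨w X, hX, ?_⟩
      have key : ∀ n : ℕ, ∀ g : Polynomial k, g ≠ 0 → g.natDegree = n → w g = w X ^ n := by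
        intro n
        induction n using Nat.strong_induction_on with
        | _ n ih =>
          intro g hg hn
          have hlc : g.leadingCoeff ≠ 0 := leadingCoeff_ne_zero.mpr hg
          have hge : g.eraseLead + C g.leadingCoeff * X ^ n = g := by
            rw [C_mul_X_pow_eq_monomial, ← hn]
            exact eraseLead_add_monomial_natDegree_leadingCoeff g
          by_cases h0 : g.eraseLead = 0
          · rw [h0, zero_add] at hge
            rw [← hge, wmono n _ hlc]
          · have hlt : g.eraseLead.natDegree < n := by
              rcases eraseLead_natDegree_lt_or_eraseLead_eq_zero g with h | h
              · omega
              · exact absurd h h0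
            have hIH : w g.eraseLead = w X ^ g.eraseLead.natDegree :=
              ih _ hlt _ h0 rfl
            have hmono : w (C g.leadingCoeff * X ^ n) = w X ^ n := wmono n _ hlc
            have hltw : w g.eraseLead < w (C g.leadingCoeff * X ^ n) := by
              rw [hIH, hmono]
              exact pow_lt_pow_right₀ hX hlt
            calc w g = w (C g.leadingCoeff * X ^ n + g.eraseLead) := by
                  rw [add_comm, hge]
              _ = w (C g.leadingCoeff * X ^ n) := w_add_eq hwmul hwadd hwtriv hltw
              _ = w X ^ n := hmono
      exact fun g hg => key g.natDegree g hg rfl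
    · -- bounded case
      have hXle : w X ≤ 1 := not_lt.mp hX
      have hle : ∀ g : Polynomial k, w g ≤ 1 := by
        intro g
        induction g using Polynomial.induction_on with
        | C a =>
          rcases eq_or_ne a 0 with rfl | ha
          · simp [hw0]
          · simp [hwtriv a ha]
        | add p q hp hq => exact (hwadd p q).trans (max_le hp hq)
        | monomial n a hpq =>
          have : C a * X ^ (n + 1) = C a * X ^ n * X := by ring
          rw [this, hwmul]
          calc w (C a * X ^ n) * w X ≤ 1 * 1 := mul_le_mul' hpq hXle
            _ = 1 := one_mul 1
      set I : Ideal (Polynomial k) :=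
        { carrier := {g | w g < 1}
          add_mem' := fun ha hb => lt_of_le_of_lt (hwadd _ _) (max_lt ha hb)
          zero_mem' := by simp [hw0]
          smul_mem' := fun c x hx => by
            simp only [Set.mem_setOf_eq, smul_eq_mul, hwmul]
            calc w c * w x ≤ 1 * w x := mul_le_mul_left (hle c) _
              _ = w x := one_mul _
              _ < 1 := hx } with hIdef
      have hmemI : ∀ g : Polynomial k, g ∈ I ↔ w g < 1 := fun g => Iff.rfl
      have hIp : I.IsPrime := by
        constructor
        · intro h
          have : (1 : Polynomial k) ∈ I := h ▸ Submodule.mem_top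
          rw [hmemI, hw1] at this
          exact lt_irrefl 1 this
        · intro a b hab
          rw [hmemI, hwmul] at hab
          by_contra h
          push_neg at h
          obtain ⟨ha, hb⟩ := h
          rw [hmemI, not_lt] at ha hb
          have ha' : w a = 1 := le_antisymm (hle a) ha
          have hb' : w b = 1 := le_antisymm (hle b) hb
          rw [ha', hb', mul_one] at hab
          exact lt_irrefl 1 hab
      by_cases hI : I = ⊥
      · -- trivial norm
        left
        intro g hg
        have : g ∉ I := by
          rw [hI]
          simpa using hg
        rw [hmemI, not_lt] at this
        exact le_antisymm (hle g) this
      · -- f-adic or residue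
        obtain ⟨p, hspan⟩ : ∃ p, I = Ideal.span {p} :=
          ⟨Submodule.IsPrincipal.generator I, (Ideal.span_singleton_generator I).symm⟩
        have hp0 : p ≠ 0 := by
          rintro rfl
          apply hI
          rw [hspan]
          simp
        have hpprime : Prime p := (Ideal.span_singleton_prime hp0).mp (hspan ▸ hIp)
        have hc : (p.leadingCoeff⁻¹ : k) ≠ 0 := by
          simp [leadingCoeff_ne_zero.mpr hp0]
        set f := p * C p.leadingCoeff⁻¹ with hfdef
        have hmonic : f.Monic := monic_mul_leadingCoeff_inv hp0
        have hassoc : Associated p f :=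
          ⟨(isUnit_C.mpr hc.isUnit).unit, rfl⟩
        have hfprime : Prime f := hassoc.prime hpprime
        have hirr : Irreducible f := hfprime.irreducible
        have hmem : ∀ g : Polynomial k, w g < 1 ↔ f ∣ g := by
          intro g
          rw [← hmemI, hspan, Ideal.mem_span_singleton]
          exact ⟨fun h => hassoc.dvd_iff_dvd_left.mp h, fun h => hassoc.dvd_iff_dvd_left.mpr h⟩
        have hwf : w f = w p * 1 := by rw [hfdef, hwmul, hwtriv _ hc]
        have hr1 : w f < 1 := (hmem f).mpr dvd_rfl
        rcases eq_or_lt_of_le (zero_le : (0 : ℝ≥0) ≤ w f) with h0 | h0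
        · -- residue seminorm
          right; right; right
          refine ⟨f, hmonic, hirr, fun g hg => ⟨?_, ?_⟩⟩
          · rintro ⟨h, rfl⟩
            rw [hwmul, ← h0, zero_mul]
          · intro hnd
            have : ¬ w g < 1 := fun hlt => hnd ((hmem g).mp hlt)
            exact le_antisymm (hle g) (not_lt.mp this)
        · -- adic norm
          right; right; left
          refine ⟨f, hmonic, hirr, w f, h0, hr1, ?_⟩
          rintro g hg m ⟨h, rfl⟩ hm1
          have hfh : ¬ f ∣ h := by
            rintro ⟨t, rfl⟩
            exact hm1 ⟨t, by ring⟩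
          have hwh : w h = 1 := by
            refine le_antisymm (hle h) (not_lt.mp fun hlt => hfh ((hmem h).mp hlt))
          rw [hwmul, wpow, hwh, mul_one]
  · -- exclusivity
    refine ⟨?_, ?_, ?_, ?_, ?_, ?_⟩
    · rintro ⟨ht, s, hs, hd⟩
      have h1 := ht X X_ne_zero
      have h2 := hd X X_ne_zero
      rw [h1, natDegree_X, pow_one] at h2
      exact hs.ne' h2.symm
    · rintro ⟨ht, f, hm, hirr, r, hr0, hr1, ha⟩
      have h2 := ha f hm.ne_zero 1 (by simpa using dvd_rfl) (by simpa using hsq f hirr)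
      rw [ht f hm.ne_zero, pow_one] at h2
      exact absurd h2.symm hr1.ne
    · rintro ⟨ht, f, hm, hirr, hres⟩
      have h2 := (hres f hm.ne_zero).1 dvd_rfl
      rw [ht f hm.ne_zero] at h2
      exact one_ne_zero h2
    · rintro ⟨⟨s, hs, hd⟩, f, hm, hirr, r, hr0, hr1, ha⟩
      have h2 := ha f hm.ne_zero 1 (by simpa using dvd_rfl) (by simpa using hsq f hirr)
      rw [hd f hm.ne_zero, pow_one] at h2
      have : (1 : ℝ≥0) ≤ s ^ f.natDegree := one_le_pow_of_one_le' hs.le _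
      rw [h2] at this
      exact absurd (this.trans_lt hr1) (lt_irrefl 1)
    · rintro ⟨⟨s, hs, hd⟩, f, hm, hirr, hres⟩
      have h2 := (hres f hm.ne_zero).1 dvd_rfl
      rw [hd f hm.ne_zero] at h2
      have : (1 : ℝ≥0) ≤ s ^ f.natDegree := one_le_pow_of_one_le' hs.le _
      rw [h2] at this
      simp at this
    · rintro ⟨⟨f1, hm1, hirr1, r, hr0, hr1, ha⟩, f2, hm2, hirr2, hres⟩
      have hf2z : f2 ≠ 0 := hm2.ne_zero
      have hd1 : 0 < f1.natDegree := hirr1.natDegree_pos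
      have hex : ∃ n, ¬ f1 ^ n ∣ f2 := by
        refine ⟨f2.natDegree + 1, fun hdvd => ?_⟩
        have hle' := natDegree_le_of_dvd hdvd hf2z
        rw [natDegree_pow] at hle'
        nlinarith [hd1]
      set N := Nat.find hex with hN
      have hN0 : N ≠ 0 := by
        intro h
        have := Nat.find_spec hex
        rw [← hN, h] at this
        simp at this
      have hmd : f1 ^ (N - 1) ∣ f2 := by
        by_contra h
        exact absurd (Nat.find_min' hex h) (by omega)
      have hmd1 : ¬ f1 ^ (N - 1 + 1) ∣ f2 := by
        have : N - 1 + 1 = N := by omega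
        rw [this]
        exact Nat.find_spec hex
      have h2 := ha f2 hf2z (N - 1) hmd hmd1
      have h3 := (hres f2 hf2z).1 dvd_rfl
      rw [h3] at h2
      exact absurd h2.symm (pow_pos hr0 _).ne'
end

section
/- Let E be the collection of subsets of ℝ≥0 consisting of all singletons {a} with a ∈ ℝ≥0 and all closed intervals [0, a] with a ∈ ℝ≥0. Define operations on subsets of ℝ≥0 by A·B := { x·y | x ∈ A, y ∈ B } and A ⊞ B := ⋃_{x ∈ A, y ∈ B} x ⊞ y, where ⊞ on elements is the tropical hyperaddition. Then E is closed under both operations, and (E, ⊞, ·) is a commutative semiring with additive neutral element {0} and multiplicative neutral element {1} (the semiring of extended tropical numbers). -/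
open scoped NNReal

/-- Tropical hyperaddition: `a ⊞ b` is the set of `c` such that the maximum
occurs twice among `a`, `b`, `c`. -/
def tropAdd (a b : ℝ≥0) : Set ℝ≥0 :=
  {c | MaxOccursTwice ![a, b, c]}

/-- Elementwise hyperaddition of subsets: `A ⊞ B := ⋃_{x ∈ A, y ∈ B} x ⊞ y`. -/
def setTropAdd (A B : Set ℝ≥0) : Set ℝ≥0 :=
  ⋃ x ∈ A, ⋃ y ∈ B, tropAdd x y

/-- Elementwise multiplication of subsets: `A · B := {x·y | x ∈ A, y ∈ B}`. -/
def setTropMul (A B : Set ℝ≥0) : Set ℝ≥0 :=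
  Set.image2 (· * ·) A B

/-- The collection of extended tropical numbers: all singletons `{a}` and all
closed intervals `[0, a]` (the ghost elements). -/
def ExtTrop : Set (Set ℝ≥0) :=
  {S | (∃ a : ℝ≥0, S = {a}) ∨ (∃ a : ℝ≥0, S = Set.Icc 0 a)}

lemma tropAdd_eq (a b : ℝ≥0) :
    tropAdd a b = if a = b then Set.Icc 0 a else {max a b} := by
  ext c
  simp only [tropAdd, MaxOccursTwice, Set.mem_setOf_eq]
  constructor
  · rintro ⟨i, j, hij, heq, hmax⟩
    fin_cases i <;> fin_cases j <;>
      simp_all [Fin.forall_fin_succ, Matrix.cons_val_zero, Matrix.cons_val_one] <;>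
      split_ifs <;> simp_all
  · intro hc
    split_ifs at hc with h
    · subst h
      obtain ⟨-, hca⟩ := hc
      exact ⟨0, 1, by decide, rfl, by simp [Fin.forall_fin_succ, hca]⟩
    · simp only [Set.mem_singleton_iff] at hc
      subst hc
      rcases le_or_gt a b with hab | hab
      · exact ⟨1, 2, by decide, by simp [max_eq_right hab], by
          simp [Fin.forall_fin_succ, hab, max_eq_right hab]⟩
      · exact ⟨0, 2, by decide, by simp [max_eq_left hab.le], by
          simp [Fin.forall_fin_succ, hab.le, max_eq_left hab.le]⟩

lemma tropAdd_comm (a b : ℝ≥0) : tropAdd a b = tropAdd b a := by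
  rw [tropAdd_eq, tropAdd_eq]
  rcases eq_or_ne a b with h | h
  · simp [h]
  · simp [h, h.symm, max_comm]

lemma tropAdd_zero (a : ℝ≥0) : tropAdd a 0 = {a} := by
  rw [tropAdd_eq]
  rcases eq_or_ne a 0 with h | h <;> simp [h]

lemma zero_tropAdd (a : ℝ≥0) : tropAdd 0 a = {a} := by
  rw [tropAdd_comm, tropAdd_zero]

lemma mem_tropAdd_le {a b c : ℝ≥0} (h : c ∈ tropAdd a b) : c ≤ max a b := by
  rw [tropAdd_eq] at h
  split_ifs at h with h'
  · exact h.2.trans (le_max_left a b)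
  · simp only [Set.mem_singleton_iff] at h; exact h.le

/-- representation of extended tropical numbers as value + ghost bit -/
def embT (a : ℝ≥0) (g : Bool) : Set ℝ≥0 := cond g (Set.Icc 0 a) {a}

noncomputable def taddT (a : ℝ≥0) (g : Bool) (b : ℝ≥0) (h : Bool) : ℝ≥0 × Bool :=
  if a < b then (b, h) else if b < a then (a, g) else (a, true)

noncomputable def tmulT (a : ℝ≥0) (g : Bool) (b : ℝ≥0) (h : Bool) : ℝ≥0 × Bool :=
  (a * b, if a * b = 0 then true else g || h)

lemma embT_mem (a : ℝ≥0) (g : Bool) : embT a g ∈ ExtTrop := by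
  cases g <;> simp [embT, ExtTrop]

lemma mem_ExtTrop_iff {A : Set ℝ≥0} : A ∈ ExtTrop ↔ ∃ a g, A = embT a g := by
  constructor
  · rintro (⟨a, rfl⟩ | ⟨a, rfl⟩)
    exacts [⟨a, false, rfl⟩, ⟨a, true, rfl⟩]
  · rintro ⟨a, g, rfl⟩; exact embT_mem a g

lemma embT_nonempty (a : ℝ≥0) (g : Bool) : (embT a g).Nonempty := by
  cases g
  · exact ⟨a, rfl⟩
  · exact ⟨0, by simp [embT]⟩

lemma setTropAdd_ss (a b : ℝ≥0) : setTropAdd {a} {b} = tropAdd a b := by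
  simp [setTropAdd]

lemma setTropAdd_sI (a b : ℝ≥0) :
    setTropAdd {a} (Set.Icc 0 b) = if a ≤ b then Set.Icc 0 b else {a} := by
  ext c
  simp only [setTropAdd, Set.mem_iUnion, Set.mem_singleton_iff, Set.mem_Icc,
    exists_prop, exists_eq_left]
  split_ifs with hab
  · constructor
    · rintro ⟨y, ⟨-, hyb⟩, hc⟩
      exact ⟨zero_le, (mem_tropAdd_le hc).trans (max_le hab hyb)⟩
    · rintro ⟨-, hcb⟩
      rcases le_or_gt c a with hca | hca
      · exact ⟨a, ⟨zero_le, hab⟩, by rw [tropAdd_eq]; simp [hca]⟩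
      · exact ⟨c, ⟨zero_le, hcb⟩, by
          rw [tropAdd_eq]; simp [hca.ne, max_eq_right hca.le]⟩
  · push_neg at hab
    constructor
    · rintro ⟨y, ⟨-, hyb⟩, hc⟩
      have hya : a ≠ y := fun h => absurd (h ▸ hyb) (not_le.mpr hab)
      rw [tropAdd_eq, if_neg hya] at hc
      simp only [Set.mem_singleton_iff] at hc
      simp [hc, max_eq_left (hyb.trans hab.le)]
    · rintro rfl
      exact ⟨0, ⟨le_rfl, zero_le⟩, by rw [tropAdd_zero]; rfl⟩

lemma setTropAdd_comm' (A B : Set ℝ≥0) : setTropAdd A B = setTropAdd B A := by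
  ext c
  simp only [setTropAdd, Set.mem_iUnion, exists_prop]
  constructor <;> rintro ⟨x, hx, y, hy, hc⟩ <;>
    exact ⟨y, hy, x, hx, by rwa [tropAdd_comm]⟩

lemma setTropAdd_II (a b : ℝ≥0) :
    setTropAdd (Set.Icc 0 a) (Set.Icc 0 b) = Set.Icc 0 (max a b) := by
  ext c
  simp only [setTropAdd, Set.mem_iUnion, Set.mem_Icc, exists_prop]
  constructor
  · rintro ⟨x, ⟨-, hxa⟩, y, ⟨-, hyb⟩, hc⟩
    exact ⟨zero_le, (mem_tropAdd_le hc).trans (max_le_max hxa hyb)⟩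
  · rintro ⟨-, hc⟩
    rcases le_total a b with hab | hab
    · have hcb : c ≤ b := hc.trans_eq (max_eq_right hab)
      exact ⟨0, ⟨le_rfl, zero_le⟩, c, ⟨zero_le, hcb⟩, by rw [zero_tropAdd]; rfl⟩
    · have hca : c ≤ a := hc.trans_eq (max_eq_left hab)
      exact ⟨c, ⟨zero_le, hca⟩, 0, ⟨le_rfl, zero_le⟩, by rw [tropAdd_zero]; rfl⟩

lemma setTropAdd_embT (a : ℝ≥0) (g : Bool) (b : ℝ≥0) (h : Bool) :
    setTropAdd (embT a g) (embT b h) = embT (taddT a g b h).1 (taddT a g b h).2 := by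
  cases g <;> cases h <;>
    simp only [embT, taddT, cond_true, cond_false]
  · rw [setTropAdd_ss, tropAdd_eq]
    rcases lt_trichotomy a b with hab | rfl | hab
    · simp [hab, hab.ne, not_lt.mpr hab.le, max_eq_right hab.le]
    · simp
    · simp [hab, hab.ne', not_lt.mpr hab.le, max_eq_left hab.le]
  · rw [setTropAdd_sI]
    rcases lt_trichotomy a b with hab | rfl | hab
    · simp [hab, hab.le]
    · simp
    · simp [hab, not_le.mpr hab, not_lt.mpr hab.le]
  · rw [setTropAdd_comm', setTropAdd_sI]
    rcases lt_trichotomy a b with hab | rfl | hab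
    · simp [hab, not_le.mpr hab, not_lt.mpr hab.le]
    · simp
    · simp [hab, hab.le, not_lt.mpr hab.le]
  · rw [setTropAdd_II]
    rcases lt_trichotomy a b with hab | rfl | hab
    · simp [hab, not_lt.mpr hab.le, max_eq_right hab.le]
    · simp
    · simp [hab, not_lt.mpr hab.le, max_eq_left hab.le]

lemma mul_s_Icc (a b : ℝ≥0) :
    Set.image2 (· * ·) {a} (Set.Icc 0 b) = Set.Icc 0 (a * b) := by
  ext c
  simp only [Set.image2_singleton_left, Set.mem_image, Set.mem_Icc]
  constructor
  · rintro ⟨y, ⟨-, hyb⟩, rfl⟩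
    exact ⟨zero_le, mul_le_mul_right hyb a⟩
  · rintro ⟨-, hc⟩
    rcases eq_or_ne a 0 with rfl | ha
    · have : c = 0 := le_zero_iff.mp (by simpa using hc)
      exact ⟨0, ⟨le_rfl, zero_le⟩, by simp [this]⟩
    · refine ⟨c / a, ⟨zero_le, ?_⟩, ?_⟩
      · rw [div_le_iff₀ (pos_iff_ne_zero.mpr ha), mul_comm]; exact hc
      · rw [mul_comm, div_mul_cancel₀ _ ha]

lemma mul_Icc_Icc (a b : ℝ≥0) :
    Set.image2 (· * ·) (Set.Icc 0 a) (Set.Icc 0 b) = Set.Icc 0 (a * b) := by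
  ext c
  simp only [Set.mem_image2, Set.mem_Icc]
  constructor
  · rintro ⟨x, ⟨-, hx⟩, y, ⟨-, hy⟩, rfl⟩
    exact ⟨zero_le, mul_le_mul' hx hy⟩
  · rintro ⟨-, hc⟩
    rcases eq_or_ne a 0 with rfl | ha
    · have : c = 0 := le_zero_iff.mp (by simpa using hc)
      exact ⟨0, ⟨le_rfl, le_rfl⟩, 0, ⟨le_rfl, zero_le⟩, by simp [this]⟩
    · refine ⟨a, ⟨zero_le, le_rfl⟩, c / a, ⟨zero_le, ?_⟩, ?_⟩
      · rw [div_le_iff₀ (pos_iff_ne_zero.mpr ha), mul_comm]; exact hc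
      · rw [mul_comm, div_mul_cancel₀ _ ha]

lemma setTropMul_comm' (A B : Set ℝ≥0) : setTropMul A B = setTropMul B A := by
  simp only [setTropMul]
  exact Set.image2_comm mul_comm

lemma setTropMul_embT (a : ℝ≥0) (g : Bool) (b : ℝ≥0) (h : Bool) :
    setTropMul (embT a g) (embT b h) = embT (tmulT a g b h).1 (tmulT a g b h).2 := by
  cases g <;> cases h <;>
    simp only [embT, tmulT, cond_true, cond_false, setTropMul]
  · rcases eq_or_ne (a * b) 0 with h0 | h0
    · simp [h0, Set.Icc_self]
    · simp [h0]
  · rw [mul_s_Icc]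
    rcases eq_or_ne (a * b) 0 with h0 | h0 <;> simp [h0]
  · rw [Set.image2_comm mul_comm, mul_s_Icc, mul_comm b a]
    rcases eq_or_ne (a * b) 0 with h0 | h0 <;> simp [h0]
  · rw [mul_Icc_Icc]
    rcases eq_or_ne (a * b) 0 with h0 | h0 <;> simp [h0]

lemma taddT_assoc (a b c : ℝ≥0) (g h k : Bool) :
    taddT (taddT a g b h).1 (taddT a g b h).2 c k
      = taddT a g (taddT b h c k).1 (taddT b h c k).2 := by
  rcases lt_trichotomy a b with hab | rfl | hab
  · rcases lt_trichotomy b c with hbc | rfl | hbc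
    · have hac := hab.trans hbc
      simp [taddT, hab, hbc, hac, not_lt.mpr hab.le, not_lt.mpr hbc.le, not_lt.mpr hac.le]
    · simp [taddT, hab, lt_irrefl, not_lt.mpr hab.le]
    · simp [taddT, hab, not_lt.mpr hbc.le, hbc, not_lt.mpr hab.le]
  · simp [taddT, lt_irrefl]
    rcases lt_trichotomy a c with hac | rfl | hac
    · simp [taddT, hac, not_lt.mpr hac.le]
    · simp [taddT, lt_irrefl]
    · simp [taddT, hac, not_lt.mpr hac.le, lt_irrefl]
  · rcases lt_trichotomy b c with hbc | rfl | hbc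
    · rcases lt_trichotomy a c with hac | rfl | hac
      · simp [taddT, hab, hbc, hac, not_lt.mpr hab.le, not_lt.mpr hbc.le, not_lt.mpr hac.le]
      · simp [taddT, hab, hbc, not_lt.mpr hab.le, not_lt.mpr hbc.le, lt_irrefl]
      · simp [taddT, hab, hbc, hac, not_lt.mpr hab.le, not_lt.mpr hbc.le, not_lt.mpr hac.le]
    · simp [taddT, hab, lt_irrefl, not_lt.mpr hab.le]
    · have hca := hbc.trans hab
      simp [taddT, hab, hbc, hca, not_lt.mpr hab.le, not_lt.mpr hbc.le, not_lt.mpr hca.le]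

lemma tdistribT (a b c : ℝ≥0) (g h k : Bool) :
    tmulT a g (taddT b h c k).1 (taddT b h c k).2
      = taddT (tmulT a g b h).1 (tmulT a g b h).2 (tmulT a g c k).1 (tmulT a g c k).2 := by
  rcases eq_or_ne a 0 with rfl | ha
  · simp [tmulT, taddT, lt_irrefl]
  · rcases lt_trichotomy b c with hbc | rfl | hbc
    · have hlt : a * b < a * c := by
        exact mul_lt_mul_of_pos_left hbc (pos_iff_ne_zero.mpr ha)
      simp [tmulT, taddT, hbc, hlt, not_lt.mpr hbc.le, not_lt.mpr hlt.le]
    · simp [tmulT, taddT, lt_irrefl]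
    · have hlt : a * c < a * b := by
        exact mul_lt_mul_of_pos_left hbc (pos_iff_ne_zero.mpr ha)
      simp [tmulT, taddT, hbc, hlt, not_lt.mpr hbc.le, not_lt.mpr hlt.le]

lemma setTropAdd_zero_left (A : Set ℝ≥0) : setTropAdd {0} A = A := by
  ext c
  simp only [setTropAdd, Set.mem_iUnion, Set.mem_singleton_iff, exists_prop,
    exists_eq_left]
  constructor
  · rintro ⟨y, hy, hc⟩
    rw [zero_tropAdd, Set.mem_singleton_iff] at hc
    exact hc ▸ hy
  · intro hc
    exact ⟨c, hc, by rw [zero_tropAdd]; rfl⟩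

lemma setTropMul_one_left (A : Set ℝ≥0) : setTropMul {1} A = A := by
  simp [setTropMul]

lemma setTropMul_zero_left {A : Set ℝ≥0} (hA : A.Nonempty) : setTropMul {0} A = {0} := by
  simp only [setTropMul, Set.image2_singleton_left]
  ext c
  simp only [Set.mem_image, Set.mem_singleton_iff]
  constructor
  · rintro ⟨y, -, rfl⟩; simp
  · rintro rfl; exact ⟨hA.choose, hA.choose_spec, by simp⟩

/-- The collection `E` of singletons and intervals `[0,a]` in `ℝ≥0` is closed
under elementwise hyperaddition and multiplication, and `(E, ⊞, ·)` is a
commutative semiring with additive neutral element `{0}` and multiplicative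
neutral element `{1}` (the semiring of extended tropical numbers). -/
theorem extTrop_commSemiring :
    (∀ A ∈ ExtTrop, ∀ B ∈ ExtTrop, setTropMul A B ∈ ExtTrop) ∧
    (∀ A ∈ ExtTrop, ∀ B ∈ ExtTrop, setTropAdd A B ∈ ExtTrop) ∧
    ({(0 : ℝ≥0)} ∈ ExtTrop) ∧ ({(1 : ℝ≥0)} ∈ ExtTrop) ∧
    (∀ A ∈ ExtTrop, ∀ B ∈ ExtTrop, setTropAdd A B = setTropAdd B A) ∧
    (∀ A ∈ ExtTrop, ∀ B ∈ ExtTrop, ∀ C ∈ ExtTrop,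
      setTropAdd (setTropAdd A B) C = setTropAdd A (setTropAdd B C)) ∧
    (∀ A ∈ ExtTrop, setTropAdd {0} A = A) ∧
    (∀ A ∈ ExtTrop, setTropAdd A {0} = A) ∧
    (∀ A ∈ ExtTrop, ∀ B ∈ ExtTrop, setTropMul A B = setTropMul B A) ∧
    (∀ A ∈ ExtTrop, ∀ B ∈ ExtTrop, ∀ C ∈ ExtTrop,
      setTropMul (setTropMul A B) C = setTropMul A (setTropMul B C)) ∧
    (∀ A ∈ ExtTrop, setTropMul {1} A = A) ∧
    (∀ A ∈ ExtTrop, setTropMul A {1} = A) ∧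
    (∀ A ∈ ExtTrop, setTropMul {0} A = {0}) ∧
    (∀ A ∈ ExtTrop, setTropMul A {0} = {0}) ∧
    (∀ A ∈ ExtTrop, ∀ B ∈ ExtTrop, ∀ C ∈ ExtTrop,
      setTropMul A (setTropAdd B C) =
        setTropAdd (setTropMul A B) (setTropMul A C)) ∧
    (∀ A ∈ ExtTrop, ∀ B ∈ ExtTrop, ∀ C ∈ ExtTrop,
      setTropMul (setTropAdd A B) C =
        setTropAdd (setTropMul A C) (setTropMul B C)) := by
  have hne : ∀ A ∈ ExtTrop, A.Nonempty := by
    intro A hA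
    obtain ⟨a, g, rfl⟩ := mem_ExtTrop_iff.mp hA
    exact embT_nonempty a g
  refine ⟨?_, ?_, ?_, ?_, ?_, ?_, ?_, ?_, ?_, ?_, ?_, ?_, ?_, ?_, ?_, ?_⟩
  · intro A hA B hB
    obtain ⟨a, g, rfl⟩ := mem_ExtTrop_iff.mp hA
    obtain ⟨b, h, rfl⟩ := mem_ExtTrop_iff.mp hB
    rw [setTropMul_embT]; exact embT_mem _ _
  · intro A hA B hB
    obtain ⟨a, g, rfl⟩ := mem_ExtTrop_iff.mp hA
    obtain ⟨b, h, rfl⟩ := mem_ExtTrop_iff.mp hB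
    rw [setTropAdd_embT]; exact embT_mem _ _
  · exact Or.inl ⟨0, rfl⟩
  · exact Or.inl ⟨1, rfl⟩
  · intro A _ B _; exact setTropAdd_comm' A B
  · intro A hA B hB C hC
    obtain ⟨a, g, rfl⟩ := mem_ExtTrop_iff.mp hA
    obtain ⟨b, h, rfl⟩ := mem_ExtTrop_iff.mp hB
    obtain ⟨c, k, rfl⟩ := mem_ExtTrop_iff.mp hC
    rw [setTropAdd_embT, setTropAdd_embT, setTropAdd_embT, setTropAdd_embT,
      taddT_assoc]
  · intro A _; exact setTropAdd_zero_left A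
  · intro A _; rw [setTropAdd_comm']; exact setTropAdd_zero_left A
  · intro A _ B _; exact setTropMul_comm' A B
  · intro A _ B _ C _
    simp only [setTropMul]
    exact Set.image2_assoc mul_assoc
  · intro A _; exact setTropMul_one_left A
  · intro A _; rw [setTropMul_comm']; exact setTropMul_one_left A
  · intro A hA; exact setTropMul_zero_left (hne A hA)
  · intro A hA; rw [setTropMul_comm']; exact setTropMul_zero_left (hne A hA)
  · intro A hA B hB C hC
    obtain ⟨a, g, rfl⟩ := mem_ExtTrop_iff.mp hA
    obtain ⟨b, h, rfl⟩ := mem_ExtTrop_iff.mp hB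
    obtain ⟨c, k, rfl⟩ := mem_ExtTrop_iff.mp hC
    rw [setTropAdd_embT, setTropMul_embT, setTropMul_embT, setTropMul_embT,
      setTropAdd_embT, tdistribT]
  · intro A hA B hB C hC
    obtain ⟨a, g, rfl⟩ := mem_ExtTrop_iff.mp hA
    obtain ⟨b, h, rfl⟩ := mem_ExtTrop_iff.mp hB
    obtain ⟨c, k, rfl⟩ := mem_ExtTrop_iff.mp hC
    rw [setTropMul_comm' _ (embT c k), setTropMul_comm' (embT a g) (embT c k),
      setTropMul_comm' (embT b h) (embT c k),
      setTropAdd_embT, setTropMul_embT, setTropMul_embT, setTropMul_embT,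
      setTropAdd_embT, tdistribT]
end
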